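/- arXiv:2409.03950 — 2 statements merged into one kernel-verified Lean document; each statement's English description precedes it below -/
import Mathlib

section
/- Let n ≥ 2 and let B = [[n,1,0],[1,1,1],[0,1,1]]. There is no nonzero 3×1 nonnegative integer column vector R such that B·R = R·n. -/
/-!
The first row of `B * R = n • R` reads `n r₀ + r₁ = n r₀`, so `r₁ = 0`; the second row then reads
`r₀ + r₂ = n r₁ = 0`, which forces `r₀ = r₂ = 0` for nonnegative entries.
-/

namespace Matrix

variable {α ι : Type*} [Semiring α]

/-- The adjacency matrix of the Cuntz splice of the one-vertex graph with `n` loops. -/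
def cuntzSplice (n : α) : Matrix (Fin 3) (Fin 3) α :=
  !![n, 1, 0; 1, 1, 1; 0, 1, 1]

section

variable {n : α} {R : Matrix (Fin 3) ι α} (h : cuntzSplice n * R = n • R) (j : ι)
include h

theorem apply_one_eq_zero_of_cuntzSplice_mul_eq_smul [IsLeftCancelAdd α] : R 1 j = 0 := by
  have row₀ := congrFun (congrFun h 0) j
  simp only [cuntzSplice, mul_apply, Fin.sum_univ_three, smul_apply, smul_eq_mul] at row₀
  simpa using row₀

theorem apply_zero_add_apply_two_eq_zero_of_cuntzSplice_mul_eq_smul [IsLeftCancelAdd α] :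
    R 0 j + R 2 j = 0 := by
  have row₁ := congrFun (congrFun h 1) j
  simp only [cuntzSplice, mul_apply, Fin.sum_univ_three, smul_apply, smul_eq_mul] at row₁
  simpa [apply_one_eq_zero_of_cuntzSplice_mul_eq_smul h j] using row₁

end

theorem eq_zero_of_nonneg_of_cuntzSplice_mul_eq_smul [PartialOrder α]
    [IsOrderedCancelAddMonoid α] {n : α} {R : Matrix (Fin 3) ι α}
    (hR : ∀ i j, 0 ≤ R i j) (h : cuntzSplice n * R = n • R) : R = 0 := by
  ext i j
  obtain ⟨h₀, h₂⟩ := (add_eq_zero_iff_of_nonneg (hR 0 j) (hR 2 j)).mp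
    (apply_zero_add_apply_two_eq_zero_of_cuntzSplice_mul_eq_smul h j)
  fin_cases i
  exacts [h₀, apply_one_eq_zero_of_cuntzSplice_mul_eq_smul h j, h₂]

end Matrix

theorem no_nonzero_column_vector_intertwining_cuntz_splice_general (n : ℕ)
    (R : Matrix (Fin 3) (Fin 1) ℤ) (hRpos : ∀ i j, 0 ≤ R i j)
    (hR : !![(n : ℤ), 1, 0; 1, 1, 1; 0, 1, 1] * R = (n : ℤ) • R) :
    R = 0 :=
  Matrix.eq_zero_of_nonneg_of_cuntzSplice_mul_eq_smul hRpos hR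

/-- Let `n ≥ 2` and `B = [[n,1,0],[1,1,1],[0,1,1]]`. There is no nonzero nonnegative
integer `3×1` column vector `R` with `B·R = n·R`, i.e. the only nonnegative integer
eigenvector of `B` with eigenvalue `n` is `0`. -/
theorem no_nonzero_column_vector_intertwining_cuntz_splice (n : ℕ) (hn : 2 ≤ n)
    (R : Matrix (Fin 3) (Fin 1) ℤ) (hRpos : ∀ i j, 0 ≤ R i j)
    (hR : !![(n : ℤ), 1, 0; 1, 1, 1; 0, 1, 1] * R = (n : ℤ) • R) :
    R = 0 :=
  no_nonzero_column_vector_intertwining_cuntz_splice_general n R hRpos hR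
end

section
/- Let A be an n×n matrix over ℕ. Every group homomorphism θ : G_A → G_B that commutes with the shift automorphisms (θ ∘ θ_A = θ_B ∘ θ) and is order-preserving arises, up to a power of the shift, from a nonnegative integer matrix: there exist a nonnegative n×p integer matrix R and r ∈ ℕ with AR = RB and θ([v,k]) = θ_B^{-r}([Rᵗ v, k]) for all [v,k] ∈ G_A. -/
/-!
Evaluate `θ` on the positive generators `[eᵢ, 0]`: order preservation gives nonnegative
representatives, which can be moved to a common level `r` by applying powers of `Bᵗ`; their
vectors are the rows of a nonnegative matrix `R₀`. Additivity then gives `θ [v, 0] = [R₀ᵗ v, r]`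
for all `v`, and compatibility with the shifts propagates this to every level. The same
compatibility shows that `R₀ᵗ Aᵗ v` and `Bᵗ R₀ᵗ v` define the same class, so they agree after
applying some power `(Bᵗ)^s`; hence `R = R₀ Bˢ` intertwines `A` and `B`, at the cost of `s` more
levels.
-/

/-- The relation defining the dimension group `G_A = (ℤ^n × ℕ)/∼`. -/
def DimRel {n : ℕ} (A : Matrix (Fin n) (Fin n) ℤ) :
    ((Fin n → ℤ) × ℕ) → ((Fin n → ℤ) × ℕ) → Prop :=
  fun p q => ∃ m : ℕ, p.2 ≤ m ∧ q.2 ≤ m ∧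
    (A.transpose ^ (m - p.2)).mulVec p.1 = (A.transpose ^ (m - q.2)).mulVec q.1

/-- Addition of representatives: `[v,k] + [w,l] = [(Aᵗ)^l v + (Aᵗ)^k w, k + l]`. -/
def DimAdd {n : ℕ} (A : Matrix (Fin n) (Fin n) ℤ) :
    ((Fin n → ℤ) × ℕ) → ((Fin n → ℤ) × ℕ) → ((Fin n → ℤ) × ℕ) :=
  fun p q => ((A.transpose ^ q.2).mulVec p.1 + (A.transpose ^ p.2).mulVec q.1, p.2 + q.2)

open Matrix

section Nonneg

variable {ι κ μ R : Type*} [Fintype κ] [Semiring R] [PartialOrder R] [IsOrderedRing R]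

lemma Matrix.mulVec_apply_nonneg {M : Matrix ι κ R} (hM : ∀ i j, 0 ≤ M i j) {v : κ → R}
    (hv : ∀ j, 0 ≤ v j) (i : ι) : 0 ≤ (M *ᵥ v) i :=
  Finset.sum_nonneg fun j _ => mul_nonneg (hM i j) (hv j)

lemma Matrix.mul_apply_nonneg {M : Matrix ι κ R} {N : Matrix κ μ R} (hM : ∀ i j, 0 ≤ M i j)
    (hN : ∀ i j, 0 ≤ N i j) (i : ι) (j : μ) : 0 ≤ (M * N) i j :=
  Finset.sum_nonneg fun k _ => mul_nonneg (hM i k) (hN k j)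

end Nonneg

lemma Matrix.pow_mulVec_pow {ι R : Type*} [Fintype ι] [DecidableEq ι] [Semiring R]
    (M : Matrix ι ι R) (a b : ℕ) (v : ι → R) : M ^ a *ᵥ (M ^ b *ᵥ v) = M ^ (a + b) *ᵥ v := by
  rw [mulVec_mulVec, ← pow_add]

section DimRel

variable {q : ℕ} {M : Matrix (Fin q) (Fin q) ℤ} {x y z x' y' : (Fin q → ℤ) × ℕ}

lemma DimRel.eventually (h : DimRel M x y) :
    ∀ᶠ m in Filter.atTop, x.2 ≤ m ∧ y.2 ≤ m ∧ Mᵀ ^ (m - x.2) *ᵥ x.1 = Mᵀ ^ (m - y.2) *ᵥ y.1 := by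
  obtain ⟨m, hx, hy, e⟩ := h
  refine Filter.eventually_atTop.2 ⟨m, fun m' hm => ⟨hx.trans hm, hy.trans hm, ?_⟩⟩
  rw [show m' - x.2 = (m' - m) + (m - x.2) by omega, show m' - y.2 = (m' - m) + (m - y.2) by omega,
    ← pow_mulVec_pow, ← pow_mulVec_pow, e]

lemma DimRel.refl (x : (Fin q → ℤ) × ℕ) : DimRel M x x := ⟨x.2, le_rfl, le_rfl, rfl⟩

lemma DimRel.symm (h : DimRel M x y) : DimRel M y x :=
  let ⟨m, hx, hy, e⟩ := h
  ⟨m, hy, hx, e.symm⟩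

lemma DimRel.trans (h : DimRel M x y) (h' : DimRel M y z) : DimRel M x z :=
  (h.eventually.and h'.eventually).exists.imp fun _ ⟨⟨hx, _, e⟩, ⟨_, hz, e'⟩⟩ =>
    ⟨hx, hz, e.trans e'⟩

lemma dimRel_pow_mulVec (v : Fin q → ℤ) (k s : ℕ) : DimRel M (Mᵀ ^ s *ᵥ v, k + s) (v, k) :=
  ⟨k + s, le_rfl, by omega, by simp⟩

lemma dimRel_zero (k l : ℕ) : DimRel M (0, k) (0, l) :=
  ⟨k + l, by omega, by omega, by simp⟩

lemma DimRel.of_mulVec_left (h : DimRel M (Mᵀ *ᵥ x.1, x.2) y) : DimRel M x (y.1, y.2 + 1) := by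
  obtain ⟨m, hx, hy, e⟩ := h
  refine ⟨m + 1, by omega, by omega, ?_⟩
  rwa [show m + 1 - x.2 = (m - x.2) + 1 by omega, show m + 1 - (y.2 + 1) = m - y.2 by omega,
    pow_succ, ← mulVec_mulVec]

lemma DimRel.mulVec (h : DimRel M x y) : DimRel M (Mᵀ *ᵥ x.1, x.2) (Mᵀ *ᵥ y.1, y.2) := by
  obtain ⟨m, hx, hy, e⟩ := h
  refine ⟨m, hx, hy, ?_⟩
  rw [mulVec_mulVec, mulVec_mulVec, ← pow_succ, ← pow_succ, pow_succ', pow_succ',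
    ← mulVec_mulVec, ← mulVec_mulVec, e]

lemma dimAdd_zero_left : DimAdd M (0, 0) x = x := by
  simp [DimAdd]

lemma dimAdd_level_zero (u w : Fin q → ℤ) : DimAdd M (u, 0) (w, 0) = (u + w, 0) := by
  simp [DimAdd]

lemma dimRel_dimAdd_same_level (u w : Fin q → ℤ) (k : ℕ) :
    DimRel M (DimAdd M (u, k) (w, k)) (u + w, k) := by
  simpa [DimAdd, mulVec_add] using dimRel_pow_mulVec (M := M) (u + w) k k

lemma DimRel.dimAdd (hx : DimRel M x x') (hy : DimRel M y y') :
    DimRel M (DimAdd M x y) (DimAdd M x' y') := by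
  obtain ⟨m, ⟨a₁, a₂, e₁⟩, ⟨b₁, b₂, e₂⟩⟩ := (hx.eventually.and hy.eventually).exists
  refine ⟨m + m, by simp only [DimAdd]; omega, by simp only [DimAdd]; omega, ?_⟩
  simp only [DimAdd, mulVec_add, pow_mulVec_pow]
  rw [show m + m - (x.2 + y.2) + y.2 = m + (m - x.2) by omega,
    show m + m - (x.2 + y.2) + x.2 = m + (m - y.2) by omega,
    show m + m - (x'.2 + y'.2) + y'.2 = m + (m - x'.2) by omega,
    show m + m - (x'.2 + y'.2) + x'.2 = m + (m - y'.2) by omega,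
    ← pow_mulVec_pow, ← pow_mulVec_pow, ← pow_mulVec_pow, ← pow_mulVec_pow, e₁, e₂]

lemma DimRel.of_dimAdd_right (h : DimRel M (DimAdd M x z) (DimAdd M y z)) : DimRel M x y := by
  obtain ⟨m, h₁, h₂, e⟩ := h
  simp only [DimAdd, mulVec_add, pow_mulVec_pow] at h₁ h₂ e
  rw [show m - (x.2 + z.2) + z.2 = m - x.2 by omega, show m - (x.2 + z.2) + x.2 = m - z.2 by omega,
    show m - (y.2 + z.2) + z.2 = m - y.2 by omega,
    show m - (y.2 + z.2) + y.2 = m - z.2 by omega] at e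
  exact ⟨m, by omega, by omega, add_right_cancel e⟩

lemma DimRel.exists_pow_mulVec_eq {u w : Fin q → ℤ} {k : ℕ} (h : DimRel M (u, k) (w, k)) :
    ∃ s, Mᵀ ^ s *ᵥ u = Mᵀ ^ s *ᵥ w :=
  let ⟨m, _, _, e⟩ := h
  ⟨m - k, e⟩

lemma exists_pow_mul_eq_of_dimRel_col {ι : Type*} [Fintype ι] [DecidableEq ι]
    {N₁ N₂ : Matrix (Fin q) ι ℤ} {k : ℕ} (h : ∀ j, DimRel M (N₁.col j, k) (N₂.col j, k)) :
    ∃ s, Mᵀ ^ s * N₁ = Mᵀ ^ s * N₂ := by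
  choose s hs using fun j => (h j).exists_pow_mulVec_eq
  refine ⟨Finset.univ.sup s, ext_of_mulVec_single fun j => ?_⟩
  rw [← mulVec_mulVec, ← mulVec_mulVec, mulVec_single_one, mulVec_single_one,
    ← Nat.sub_add_cancel (Finset.le_sup (Finset.mem_univ j)), ← pow_mulVec_pow,
    ← pow_mulVec_pow, hs j]

lemma exists_nonneg_matrix_dimRel_single {ι : Type*} [Fintype ι] [DecidableEq ι]
    (hM : ∀ i j, 0 ≤ M i j) (w : ι → Fin q → ℤ) (l : ι → ℕ) (hw : ∀ i j, 0 ≤ w i j) :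
    ∃ (R : Matrix ι (Fin q) ℤ) (r : ℕ),
      (∀ i j, 0 ≤ R i j) ∧ ∀ i, DimRel M (w i, l i) (Rᵀ *ᵥ Pi.single i 1, r) := by
  refine ⟨of fun i => Mᵀ ^ (Finset.univ.sup l - l i) *ᵥ w i, Finset.univ.sup l,
    fun i => mulVec_apply_nonneg (pow_apply_nonneg (fun i j => hM j i) _) (hw i), fun i => ?_⟩
  have h := (dimRel_pow_mulVec (M := M) (w i) (l i) (Finset.univ.sup l - l i)).symm
  rw [Nat.add_sub_cancel' (Finset.le_sup (Finset.mem_univ i))] at h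
  convert h using 2
  ext j
  simp

end DimRel

section Hom

variable {n p : ℕ} {A : Matrix (Fin n) (Fin n) ℤ} {B : Matrix (Fin p) (Fin p) ℤ}
  {θ : ((Fin n → ℤ) × ℕ) → ((Fin p → ℤ) × ℕ)}

lemma dimRel_map_zero (hadd : ∀ x y, DimRel B (θ (DimAdd A x y)) (DimAdd B (θ x) (θ y))) :
    DimRel B (θ (0, 0)) (0, 0) := by
  have h := hadd (0, 0) (0, 0)
  rw [dimAdd_zero_left] at h
  refine (DimRel.of_dimAdd_right (z := θ (0, 0)) ?_).symm
  rwa [dimAdd_zero_left]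

lemma dimRel_map_of_forall_single
    (hadd : ∀ x y, DimRel B (θ (DimAdd A x y)) (DimAdd B (θ x) (θ y)))
    (R : Matrix (Fin p) (Fin n) ℤ) (r : ℕ)
    (hR : ∀ i, DimRel B (θ (Pi.single i 1, 0)) (R *ᵥ Pi.single i 1, r)) (v : Fin n → ℤ) :
    DimRel B (θ (v, 0)) (R *ᵥ v, r) := by
  let S : AddSubgroup (Fin n → ℤ) :=
    { carrier := {v | DimRel B (θ (v, 0)) (R *ᵥ v, r)}
      zero_mem' := by
        show DimRel B (θ (0, 0)) (R *ᵥ 0, r)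
        rw [mulVec_zero]
        exact (dimRel_map_zero hadd).trans (dimRel_zero 0 r)
      add_mem' := fun {u w} hu hw => by
        show DimRel B (θ (u + w, 0)) (R *ᵥ (u + w), r)
        rw [← dimAdd_level_zero, mulVec_add]
        exact ((hadd _ _).trans (hu.dimAdd hw)).trans (dimRel_dimAdd_same_level _ _ r)
      neg_mem' := fun {u} hu => by
        show DimRel B (θ (-u, 0)) (R *ᵥ -u, r)
        have hθ : DimRel B (DimAdd B (θ (-u, 0)) (θ (u, 0))) (0, 0) := by
          have h := hadd (-u, 0) (u, 0)
          rw [dimAdd_level_zero, neg_add_cancel] at h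
          exact h.symm.trans (dimRel_map_zero hadd)
        have hR : DimRel B (DimAdd B (R *ᵥ -u, r) (θ (u, 0))) (0, 0) := by
          have h := ((DimRel.refl _).dimAdd hu).trans (dimRel_dimAdd_same_level (R *ᵥ -u) _ r)
          rw [← mulVec_add, neg_add_cancel, mulVec_zero] at h
          exact h.trans (dimRel_zero r 0)
        exact (hθ.trans hR.symm).of_dimAdd_right }
  rw [pi_eq_sum_univ' v]
  exact S.sum_mem fun i _ => S.zsmul_mem (hR i) (v i)

lemma dimRel_map_of_level_zero (hwd : ∀ x y, DimRel A x y → DimRel B (θ x) (θ y))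
    (hshift : ∀ x : (Fin n → ℤ) × ℕ,
      DimRel B (θ (A.transpose.mulVec x.1, x.2)) (B.transpose.mulVec (θ x).1, (θ x).2))
    {R : Matrix (Fin p) (Fin n) ℤ} {r : ℕ} (h₀ : ∀ v, DimRel B (θ (v, 0)) (R *ᵥ v, r))
    (v : Fin n → ℤ) (k : ℕ) : DimRel B (θ (v, k)) (R *ᵥ v, k + r) := by
  induction k with
  | zero => simpa using h₀ v
  | succ k ih =>
    have hA : DimRel A (Aᵀ *ᵥ v, k + 1) (v, k) := by simpa using dimRel_pow_mulVec (M := A) v k 1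
    rw [Nat.add_right_comm]
    exact ((hshift (v, k + 1)).symm.trans ((hwd _ _ hA).trans ih)).of_mulVec_left

end Hom

theorem dimGroup_hom_lifts_to_matrix_general {n p : ℕ}
    (A : Matrix (Fin n) (Fin n) ℤ) (B : Matrix (Fin p) (Fin p) ℤ)
    (hBpos : ∀ i j, 0 ≤ B i j)
    (θ : ((Fin n → ℤ) × ℕ) → ((Fin p → ℤ) × ℕ))
    -- θ is well defined on classes
    (hwd : ∀ x y, DimRel A x y → DimRel B (θ x) (θ y))
    -- θ is a group homomorphism
    (hadd : ∀ x y, DimRel B (θ (DimAdd A x y)) (DimAdd B (θ x) (θ y)))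
    -- θ commutes with the shift automorphisms: θ ∘ θ_A = θ_B ∘ θ
    (hshift : ∀ x : (Fin n → ℤ) × ℕ,
      DimRel B (θ (A.transpose.mulVec x.1, x.2)) (B.transpose.mulVec (θ x).1, (θ x).2))
    -- θ is order-preserving: the positive cone maps into the positive cone
    (hord : ∀ x : (Fin n → ℤ) × ℕ, (∀ i, 0 ≤ x.1 i) →
      ∃ (w : Fin p → ℤ) (l : ℕ), DimRel B (θ x) (w, l) ∧ ∀ i, 0 ≤ w i) :
    ∃ (R : Matrix (Fin n) (Fin p) ℤ) (r : ℕ),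
      (∀ i j, 0 ≤ R i j) ∧ A * R = R * B ∧
      ∀ (v : Fin n → ℤ) (k : ℕ),
        DimRel B (θ (v, k)) (R.transpose.mulVec v, k + r) := by
  choose w l hwl hw using fun i : Fin n =>
    hord (Pi.single i 1, 0) (Pi.single_nonneg.2 zero_le_one : (0 : Fin n → ℤ) ≤ _)
  obtain ⟨R, r, hR, hRw⟩ := exists_nonneg_matrix_dimRel_single hBpos w l hw
  have h₀ : ∀ v, DimRel B (θ (v, 0)) (Rᵀ *ᵥ v, r) :=
    dimRel_map_of_forall_single hadd Rᵀ r fun i => (hwl i).trans (hRw i)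
  have hcomm : ∀ v, DimRel B (Rᵀ *ᵥ (Aᵀ *ᵥ v), r) (Bᵀ *ᵥ (Rᵀ *ᵥ v), r) := fun v =>
    (h₀ (Aᵀ *ᵥ v)).symm.trans ((hshift (v, 0)).trans (h₀ v).mulVec)
  obtain ⟨s, hs⟩ := exists_pow_mul_eq_of_dimRel_col (N₁ := Rᵀ * Aᵀ) (N₂ := Bᵀ * Rᵀ) fun j => by
    simpa only [← mulVec_single_one, ← mulVec_mulVec] using hcomm (Pi.single j 1)
  refine ⟨R * B ^ s, r + s, mul_apply_nonneg hR (pow_apply_nonneg hBpos s), ?_, fun v k => ?_⟩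
  · have hAR : A * R * B ^ s = R * B * B ^ s := by
      simpa only [transpose_mul, transpose_pow, transpose_transpose] using congrArg transpose hs
    rw [← Matrix.mul_assoc, hAR, Matrix.mul_assoc, Matrix.mul_assoc, ← pow_succ', pow_succ]
  · rw [transpose_mul, transpose_pow, ← mulVec_mulVec, ← add_assoc]
    exact (dimRel_map_of_level_zero hwd hshift h₀ v k).trans (dimRel_pow_mulVec _ _ _).symm

/-- Every order-preserving group homomorphism `θ : G_A → G_B` commuting with the shift
automorphisms arises, up to a power of the shift, from a nonnegative integer matrix `R`
with `AR = RB`: there exist such an `R` and `r ∈ ℕ` with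
`θ([v,k]) = θ_B^{-r}([Rᵗ v, k]) = [Rᵗ v, k + r]` for all `[v,k] ∈ G_A`.
Here `θ` is described on representatives by a map respecting `∼`. -/
theorem dimGroup_hom_lifts_to_matrix {n p : ℕ}
    (A : Matrix (Fin n) (Fin n) ℤ) (B : Matrix (Fin p) (Fin p) ℤ)
    (hApos : ∀ i j, 0 ≤ A i j) (hBpos : ∀ i j, 0 ≤ B i j)
    (θ : ((Fin n → ℤ) × ℕ) → ((Fin p → ℤ) × ℕ))
    -- θ is well defined on classes
    (hwd : ∀ x y, DimRel A x y → DimRel B (θ x) (θ y))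
    -- θ is a group homomorphism
    (hadd : ∀ x y, DimRel B (θ (DimAdd A x y)) (DimAdd B (θ x) (θ y)))
    -- θ commutes with the shift automorphisms: θ ∘ θ_A = θ_B ∘ θ
    (hshift : ∀ x : (Fin n → ℤ) × ℕ,
      DimRel B (θ (A.transpose.mulVec x.1, x.2)) (B.transpose.mulVec (θ x).1, (θ x).2))
    -- θ is order-preserving: the positive cone maps into the positive cone
    (hord : ∀ x : (Fin n → ℤ) × ℕ, (∀ i, 0 ≤ x.1 i) →
      ∃ (w : Fin p → ℤ) (l : ℕ), DimRel B (θ x) (w, l) ∧ ∀ i, 0 ≤ w i) :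
    ∃ (R : Matrix (Fin n) (Fin p) ℤ) (r : ℕ),
      (∀ i j, 0 ≤ R i j) ∧ A * R = R * B ∧
      ∀ (v : Fin n → ℤ) (k : ℕ),
        DimRel B (θ (v, k)) (R.transpose.mulVec v, k + r) :=
  dimGroup_hom_lifts_to_matrix_general A B hBpos θ hwd hadd hshift hord
end
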